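/- For p ≥ 1 and q ≥ 0, the linear map Z_1 : H_{p,q} → H_{p−1,q+1} is an isomorphism of finite-dimensional complex vector spaces. -/

import Mathlib

open MvPolynomial

/-- The CR vector field `Z₁ = w̄ ∂/∂z − z̄ ∂/∂w` acting formally on polynomials in
`z, w, z̄, w̄` (variables `0, 1, 2, 3`). -/
noncomputable def Z1 (P : MvPolynomial (Fin 4) ℂ) : MvPolynomial (Fin 4) ℂ :=
  X 3 * pderiv 0 P - X 2 * pderiv 1 P

/-- Membership in the unit sphere `S³ ⊂ ℂ²`. -/
def OnSphere (v : ℂ × ℂ) : Prop :=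
  Complex.normSq v.1 + Complex.normSq v.2 = 1

/-- Evaluation of a polynomial in `z, w, z̄, w̄` at a point of `ℂ²`. -/
noncomputable def evalS (P : MvPolynomial (Fin 4) ℂ) (v : ℂ × ℂ) : ℂ :=
  eval ![v.1, v.2, starRingEnd ℂ v.1, starRingEnd ℂ v.2] P

/-- `P` is homogeneous of bidegree `(p,q)`: degree `p` in `(z,w)`, degree `q` in `(z̄,w̄)`. -/
def IsBihomogeneous (p q : ℕ) (P : MvPolynomial (Fin 4) ℂ) : Prop :=
  ∀ m ∈ P.support, m 0 + m 1 = p ∧ m 2 + m 3 = q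

/-- (One quarter of) the Laplacian of `ℝ⁴ ≅ ℂ²`: `∂z∂z̄ + ∂w∂w̄`. -/
noncomputable def lap (P : MvPolynomial (Fin 4) ℂ) : MvPolynomial (Fin 4) ℂ :=
  pderiv 2 (pderiv 0 P) + pderiv 3 (pderiv 1 P)

/-- `P` is a harmonic homogeneous polynomial of bidegree `(p,q)`, so that its restriction
to `S³` is an element of the spherical harmonic space `H_{p,q}`. -/
def IsHpq (p q : ℕ) (P : MvPolynomial (Fin 4) ℂ) : Prop :=
  IsBihomogeneous p q P ∧ lap P = 0


/-! With `Z̄₁ = w ∂/∂z̄ − z ∂/∂w̄` and the Euler operators `E = z ∂/∂z + w ∂/∂w`,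
`Ē = z̄ ∂/∂z̄ + w̄ ∂/∂w̄`, a direct computation gives
`Z₁ Z̄₁ = (|z|² + |w|²) Δ − E Ē − Ē` and `Z̄₁ Z₁ = (|z|² + |w|²) Δ − E Ē − E`, while `Z̄₁`
commutes with `Δ`. By Euler's identity, on harmonic polynomials of bidegree `(p + 1, q)` resp.
`(p, q + 1)` both composites act as the nonzero scalar `−(p + 1)(q + 1)`, so `Z₁` is injective
and `−Z̄₁ / ((p + 1)(q + 1))` is a right inverse mapping `H_{p,q+1}` into `H_{p+1,q}`.

Restrictions to `S³` determine bihomogeneous polynomials: by homogeneity such a polynomial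
vanishing on `S³` vanishes on `ℂ²`, and a polynomial in `z, w, z̄, w̄` vanishing on `ℂ²` is zero
because, after the invertible substitution `z = x₀ + i x₁`, `w = x₂ + i x₃`, it vanishes on `ℝ⁴`. -/

namespace MvPolynomial

theorem pderiv_pderiv_comm {σ R : Type*} [CommSemiring R] [DecidableEq σ] (i j : σ)
    (P : MvPolynomial σ R) : pderiv i (pderiv j P) = pderiv j (pderiv i P) := by
  induction P using MvPolynomial.induction_on with
  | C a => simp
  | add p q hp hq => simp [hp, hq]
  | mul_X p k ih =>
    simp only [Derivation.leibniz, pderiv_X, Pi.single_apply, smul_eq_mul, mul_ite, mul_one,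
      mul_zero, map_add, ih]
    split_ifs <;> simp [add_comm, add_left_comm]

theorem IsHomogeneous.eval_smul {σ R : Type*} [CommSemiring R] {φ : MvPolynomial σ R} {n : ℕ}
    (h : φ.IsHomogeneous n) (r : R) (x : σ → R) : eval (r • x) φ = r ^ n * eval x φ := by
  rw [eval_eq, eval_eq, Finset.mul_sum]
  refine Finset.sum_congr rfl fun d hd => ?_
  simp_rw [Pi.smul_apply, smul_eq_mul, mul_pow, Finset.prod_mul_distrib,
    Finset.prod_pow_eq_pow_sum, ← h.degree_eq_sum_deg_support hd]
  ring

theorem IsWeightedHomogeneous.X_mul_pderiv {σ R : Type*} [CommSemiring R]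
    {φ : MvPolynomial σ R} {w : σ → ℕ} {n : ℕ} {i : σ} (j : σ)
    (h : φ.IsWeightedHomogeneous w (n + w i)) :
    (X j * pderiv i φ).IsWeightedHomogeneous w (n + w j) :=
  add_comm n (w j) ▸ (isWeightedHomogeneous_X R w j).mul (h.pderiv rfl)

end MvPolynomial

noncomputable def Z1bar (P : MvPolynomial (Fin 4) ℂ) : MvPolynomial (Fin 4) ℂ :=
  X 1 * pderiv 2 P - X 0 * pderiv 3 P

noncomputable def eulerHol (P : MvPolynomial (Fin 4) ℂ) : MvPolynomial (Fin 4) ℂ :=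
  X 0 * pderiv 0 P + X 1 * pderiv 1 P

noncomputable def eulerAntihol (P : MvPolynomial (Fin 4) ℂ) : MvPolynomial (Fin 4) ℂ :=
  X 2 * pderiv 2 P + X 3 * pderiv 3 P

section Commutators

variable (Q : MvPolynomial (Fin 4) ℂ)

theorem Z1_Z1bar : Z1 (Z1bar Q) =
    (X 0 * X 2 + X 1 * X 3) * lap Q - eulerHol (eulerAntihol Q) - eulerAntihol Q := by
  simp only [Z1, Z1bar, eulerHol, eulerAntihol, lap, map_add, map_sub, Derivation.leibniz,
    smul_eq_mul, pderiv_X, Pi.single_apply, Fin.reduceEq, ↓reduceIte, mul_one, mul_zero, add_zero,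
    pderiv_pderiv_comm]
  ring

theorem Z1bar_Z1 : Z1bar (Z1 Q) =
    (X 0 * X 2 + X 1 * X 3) * lap Q - eulerHol (eulerAntihol Q) - eulerHol Q := by
  simp only [Z1, Z1bar, eulerHol, eulerAntihol, lap, map_add, map_sub, Derivation.leibniz,
    smul_eq_mul, pderiv_X, Pi.single_apply, Fin.reduceEq, ↓reduceIte, mul_one, mul_zero, add_zero,
    pderiv_pderiv_comm]
  ring

theorem lap_Z1bar : lap (Z1bar Q) = Z1bar (lap Q) := by
  simp only [Z1bar, lap, map_add, map_sub, Derivation.leibniz, smul_eq_mul, pderiv_X,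
    Pi.single_apply, Fin.reduceEq, ↓reduceIte, mul_one, mul_zero, add_zero, pderiv_pderiv_comm]
  ring

end Commutators

section Linearity

variable (P Q : MvPolynomial (Fin 4) ℂ) (c : ℂ)

theorem Z1_sub : Z1 (P - Q) = Z1 P - Z1 Q := by
  simp only [Z1, map_sub]
  ring

theorem lap_sub : lap (P - Q) = lap P - lap Q := by
  simp only [lap, map_sub]
  ring

theorem lap_smul : lap (c • P) = c • lap P := by
  simp only [lap, Derivation.map_smul, smul_add]

theorem Z1bar_zero : Z1bar 0 = 0 := by
  simp [Z1bar]

theorem evalS_sub (v : ℂ × ℂ) : evalS (P - Q) v = evalS P v - evalS Q v :=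
  map_sub _ P Q

end Linearity

def holWeight : Fin 4 → ℕ := ![1, 1, 0, 0]

def antiholWeight : Fin 4 → ℕ := ![0, 0, 1, 1]

theorem isBihomogeneous_iff {p q : ℕ} {P : MvPolynomial (Fin 4) ℂ} :
    IsBihomogeneous p q P ↔
      P.IsWeightedHomogeneous holWeight p ∧ P.IsWeightedHomogeneous antiholWeight q := by
  simp only [IsBihomogeneous, IsWeightedHomogeneous, Finsupp.weight_eq_sum, Fin.sum_univ_four,
    holWeight, antiholWeight, mem_support_iff]
  simp [imp_and, forall_and]

namespace IsBihomogeneous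

variable {p q : ℕ} {P Q : MvPolynomial (Fin 4) ℂ}

theorem isHomogeneous (h : IsBihomogeneous p q P) : P.IsHomogeneous (p + q) := by
  intro m hm
  obtain ⟨hpm, hqm⟩ := h m (mem_support_iff.mpr hm)
  simp only [Finsupp.weight_eq_sum, Pi.one_apply, smul_eq_mul, mul_one, Fin.sum_univ_four]
  omega

theorem sub (hP : IsBihomogeneous p q P) (hQ : IsBihomogeneous p q Q) :
    IsBihomogeneous p q (P - Q) := by
  rw [isBihomogeneous_iff] at *
  exact ⟨hP.1.sub hQ.1, hP.2.sub hQ.2⟩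

theorem smul (h : IsBihomogeneous p q P) (c : ℂ) : IsBihomogeneous p q (c • P) := by
  rw [isBihomogeneous_iff] at *
  exact ⟨(weightedHomogeneousSubmodule ℂ _ _).smul_mem c h.1,
    (weightedHomogeneousSubmodule ℂ _ _).smul_mem c h.2⟩

theorem eulerHol_eq (h : IsBihomogeneous p q P) : eulerHol P = (p : ℂ) • P := by
  simpa [Fin.sum_univ_four, holWeight, eulerHol, Nat.cast_smul_eq_nsmul] using
    (isBihomogeneous_iff.mp h).1.sum_weight_X_mul_pderiv

theorem eulerAntihol_eq (h : IsBihomogeneous p q P) : eulerAntihol P = (q : ℂ) • P := by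
  simpa [Fin.sum_univ_four, antiholWeight, eulerAntihol, Nat.cast_smul_eq_nsmul] using
    (isBihomogeneous_iff.mp h).2.sum_weight_X_mul_pderiv

theorem Z1 (h : IsBihomogeneous (p + 1) q P) : IsBihomogeneous p (q + 1) (Z1 P) := by
  obtain ⟨hhol, hanti⟩ := isBihomogeneous_iff.mp h
  exact isBihomogeneous_iff.mpr
    ⟨(hhol.X_mul_pderiv (n := p) (i := 0) 3).sub (hhol.X_mul_pderiv (n := p) (i := 1) 2),
      (hanti.X_mul_pderiv (n := q) (i := 0) 3).sub (hanti.X_mul_pderiv (n := q) (i := 1) 2)⟩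

theorem Z1bar (h : IsBihomogeneous p (q + 1) P) : IsBihomogeneous (p + 1) q (Z1bar P) := by
  obtain ⟨hhol, hanti⟩ := isBihomogeneous_iff.mp h
  exact isBihomogeneous_iff.mpr
    ⟨(hhol.X_mul_pderiv (n := p) (i := 2) 1).sub (hhol.X_mul_pderiv (n := p) (i := 3) 0),
      (hanti.X_mul_pderiv (n := q) (i := 2) 1).sub (hanti.X_mul_pderiv (n := q) (i := 3) 0)⟩

end IsBihomogeneous

namespace IsHpq

variable {p q : ℕ} {P Q : MvPolynomial (Fin 4) ℂ}

theorem sub (hP : IsHpq p q P) (hQ : IsHpq p q Q) : IsHpq p q (P - Q) :=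
  ⟨hP.1.sub hQ.1, by rw [lap_sub, hP.2, hQ.2, sub_zero]⟩

theorem smul (h : IsHpq p q P) (c : ℂ) : IsHpq p q (c • P) :=
  ⟨h.1.smul c, by rw [lap_smul, h.2, smul_zero]⟩

theorem Z1bar_Z1 (h : IsHpq (p + 1) q P) :
    Z1bar (Z1 P) = -(((p + 1) * (q + 1) : ℕ) : ℂ) • P := by
  rw [_root_.Z1bar_Z1, h.2, mul_zero, h.1.eulerAntihol_eq, (h.1.smul _).eulerHol_eq,
    h.1.eulerHol_eq]
  push_cast
  module

theorem Z1_Z1bar (h : IsHpq p (q + 1) Q) :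
    Z1 (Z1bar Q) = -(((p + 1) * (q + 1) : ℕ) : ℂ) • Q := by
  rw [_root_.Z1_Z1bar, h.2, mul_zero, h.1.eulerAntihol_eq, (h.1.smul _).eulerHol_eq]
  push_cast
  module

theorem eq_zero_of_Z1_eq_zero (h : IsHpq (p + 1) q P) (hZ : Z1 P = 0) : P = 0 := by
  have h' := h.Z1bar_Z1
  rw [hZ, Z1bar_zero, eq_comm, smul_eq_zero] at h'
  exact h'.resolve_left (neg_ne_zero.mpr (Nat.cast_ne_zero.mpr (by positivity)))

theorem Z1bar (h : IsHpq p (q + 1) Q) : IsHpq (p + 1) q (Z1bar Q) :=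
  ⟨h.1.Z1bar, by rw [lap_Z1bar, h.2, Z1bar_zero]⟩

end IsHpq

noncomputable def realCoords : Fin 4 → MvPolynomial (Fin 4) ℂ :=
  ![X 0 + Complex.I • X 1, X 2 + Complex.I • X 3, X 0 - Complex.I • X 1, X 2 - Complex.I • X 3]

noncomputable def complexCoords : Fin 4 → MvPolynomial (Fin 4) ℂ :=
  ![(2⁻¹ : ℂ) • (X 0 + X 2), (-Complex.I / 2) • (X 0 - X 2),
    (2⁻¹ : ℂ) • (X 1 + X 3), (-Complex.I / 2) • (X 1 - X 3)]

theorem bind₁_complexCoords_realCoords (P : MvPolynomial (Fin 4) ℂ) :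
    bind₁ complexCoords (bind₁ realCoords P) = P := by
  have hI : Complex.I * (-Complex.I / 2) = 2⁻¹ := by field_simp; simp
  have hX : (fun i => bind₁ complexCoords (realCoords i)) = X := by
    funext i
    fin_cases i <;>
      simp only [realCoords, complexCoords, Fin.reduceFinMk, Fin.zero_eta, Fin.mk_one,
        Matrix.cons_val, Matrix.cons_val_zero, Matrix.cons_val_one, map_add, map_sub, map_smul,
        bind₁_X_right, smul_add, smul_smul, hI] <;>
      module
  rw [bind₁_bind₁, hX, bind₁_X_left, AlgHom.id_apply]

theorem eval_bind₁_realCoords (P : MvPolynomial (Fin 4) ℂ) (x : Fin 4 → ℝ) :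
    eval (fun i => (x i : ℂ)) (bind₁ realCoords P) =
      evalS P (x 0 + Complex.I * x 1, x 2 + Complex.I * x 3) := by
  rw [evalS, eval, eval₂Hom_bind₁]
  congr 2
  funext i
  fin_cases i <;>
    simp only [realCoords, Fin.reduceFinMk, Fin.zero_eta, Fin.mk_one, Matrix.cons_val,
      Matrix.cons_val_zero, Matrix.cons_val_one, map_add, map_sub, eval₂Hom_smul, eval₂Hom_X',
      RingHom.id_apply, map_mul, Complex.conj_ofReal, Complex.conj_I] <;>
    ring

theorem eq_zero_of_evalS_eq_zero {P : MvPolynomial (Fin 4) ℂ} (h : ∀ v, evalS P v = 0) :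
    P = 0 := by
  have hreal : bind₁ realCoords P = 0 := by
    refine funext_set (fun _ => Set.range Complex.ofReal)
      (fun _ => Set.infinite_range_of_injective Complex.ofReal_injective) fun x hx => ?_
    choose y hy using Set.mem_univ_pi.mp hx
    obtain rfl : (fun i => (y i : ℂ)) = x := funext hy
    rw [eval_bind₁_realCoords, h, map_zero]
  rw [← bind₁_complexCoords_realCoords P, hreal, map_zero]

theorem evalS_ofReal_smul {n : ℕ} {P : MvPolynomial (Fin 4) ℂ} (h : P.IsHomogeneous n) (r : ℝ)
    (v : ℂ × ℂ) : evalS P ((r : ℂ) • v) = (r : ℂ) ^ n * evalS P v := by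
  rw [evalS, evalS, ← h.eval_smul]
  congr 2
  funext i
  fin_cases i <;> simp [Complex.conj_ofReal]

theorem exists_ofReal_smul_onSphere (v : ℂ × ℂ) :
    ∃ (r : ℝ) (u : ℂ × ℂ), OnSphere u ∧ v = (r : ℂ) • u := by
  have h1 := Complex.normSq_nonneg v.1
  have h2 := Complex.normSq_nonneg v.2
  rcases (add_nonneg h1 h2).eq_or_lt with hN | hN
  · refine ⟨0, (1, 0), by simp [OnSphere], ?_⟩
    have hv1 : v.1 = 0 := Complex.normSq_eq_zero.mp (by linarith)
    have hv2 : v.2 = 0 := Complex.normSq_eq_zero.mp (by linarith)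
    ext <;> simp [hv1, hv2]
  · set N := Complex.normSq v.1 + Complex.normSq v.2
    have hr : (√N : ℂ) ≠ 0 := by exact_mod_cast (Real.sqrt_pos.mpr hN).ne'
    refine ⟨√N, ((√N : ℂ)⁻¹) • v, ?_, by rw [smul_smul, mul_inv_cancel₀ hr, one_smul]⟩
    simp only [OnSphere, Prod.smul_fst, Prod.smul_snd, smul_eq_mul, Complex.normSq_mul, ← mul_add]
    rw [map_inv₀, Complex.normSq_ofReal, Real.mul_self_sqrt hN.le, inv_mul_cancel₀ hN.ne']

theorem eq_zero_of_evalS_eq_zero_onSphere {n : ℕ} {P : MvPolynomial (Fin 4) ℂ}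
    (h : P.IsHomogeneous n) (h0 : ∀ v, OnSphere v → evalS P v = 0) : P = 0 := by
  refine eq_zero_of_evalS_eq_zero fun v => ?_
  obtain ⟨r, u, hu, rfl⟩ := exists_ofReal_smul_onSphere v
  rw [evalS_ofReal_smul h, h0 u hu, mul_zero]

/-- for `p ≥ 1`, `q ≥ 0`, the (linear) map `Z₁ : H_{p,q} → H_{p−1,q+1}`
is an isomorphism of finite-dimensional complex vector spaces: it is injective
(as a map of restrictions to `S³`) and surjective onto `H_{p−1,q+1}`. -/
theorem stmt2 (p q : ℕ) (hp : 1 ≤ p) :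
    (∀ P P' : MvPolynomial (Fin 4) ℂ, IsHpq p q P → IsHpq p q P' →
      (∀ v, OnSphere v → evalS (Z1 P) v = evalS (Z1 P') v) →
      ∀ v, OnSphere v → evalS P v = evalS P' v) ∧
    (∀ Q : MvPolynomial (Fin 4) ℂ, IsHpq (p - 1) (q + 1) Q →
      ∃ P : MvPolynomial (Fin 4) ℂ, IsHpq p q P ∧
        ∀ v, OnSphere v → evalS (Z1 P) v = evalS Q v) := by
  obtain ⟨p, rfl⟩ := Nat.exists_eq_add_of_le' hp
  rw [Nat.add_sub_cancel]
  constructor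
  · intro P P' hP hP' hZ
    have hD := hP.sub hP'
    have hZD : Z1 (P - P') = 0 :=
      eq_zero_of_evalS_eq_zero_onSphere hD.1.Z1.isHomogeneous fun v hv => by
        rw [Z1_sub, evalS_sub, hZ v hv, sub_self]
    rw [sub_eq_zero.mp (hD.eq_zero_of_Z1_eq_zero hZD)]
    exact fun _ _ => rfl
  · intro Q hQ
    set c : ℂ := (((p + 1) * (q + 1) : ℕ) : ℂ)
    have hc : c ≠ 0 := Nat.cast_ne_zero.mpr (by positivity)
    refine ⟨Z1bar (-c⁻¹ • Q), (hQ.smul _).Z1bar, fun v _ => ?_⟩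
    rw [(hQ.smul _).Z1_Z1bar, smul_smul, neg_mul_neg, mul_inv_cancel₀ hc, one_smul]
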